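/- With A ∈ GL_n(ℂ), AᵀA diagonal, selecting the first v rows and columns, assume the rows of A_(v) and of A^(v) are basic sets for the rows of Ā_(v) and Ā^(v) respectively. If d_{ij} (v+1 ≤ i ≤ n, 1 ≤ j ≤ v) are the decomposition numbers expanding the last n−v rows of Ā_(v) in terms of the rows of A_(v), and d′_{ji} are the analogous decomposition numbers for Ā^(v), then d_{ij} = −d′_{ji}; moreover with D̂ = (d_{ij}), the two Cartan matrices satisfy C_(v) = E_v + D̂ᵀD̂ and C^(v) = E_{n−v} + D̂D̂ᵀ. -/

import Mathlib

/-!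
Since `AᵀA = Z` is diagonal and invertible, `A Z⁻¹ Aᵀ = 1`. In block form the off-diagonal blocks
of `A` are `D̂ A₁₁` and `D' A₂₂`, so `P = [[1, -D'], [-D̂, 1]]` makes `P A` block diagonal. Then
`P Pᵀ = (P A) Z⁻¹ (P A)ᵀ` is block diagonal too, and its lower-left block `-D̂ - D'ᵀ` vanishes.
The Cartan matrices are the Gram matrices of the stacked decomposition matrices `[1; D̂]` and
`[D'; 1] = [-D̂ᵀ; 1]`.
-/

open Matrix

namespace Matrix

theorem mul_diagonal_inv_mul_transpose_eq_one {K n : Type*} [Field K] [Fintype n]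
    [DecidableEq n] {A : Matrix n n K} {z : n → K} (hA : IsUnit A.det)
    (h : Aᵀ * A = diagonal z) : A * diagonal z⁻¹ * Aᵀ = 1 := by
  have hz : ∀ i, z i ≠ 0 := by
    have : ∏ i, z i ≠ 0 := by
      rw [← det_diagonal, ← h, det_mul, det_transpose]
      exact mul_ne_zero hA.ne_zero hA.ne_zero
    exact fun i => Finset.prod_ne_zero_iff.mp this i (Finset.mem_univ i)
  rw [mul_assoc, mul_eq_one_comm, mul_assoc, h, diagonal_mul_diagonal]
  simp [hz]

theorem transpose_eq_neg_of_fromBlocks_mul_diagonal_mul_transpose_eq_one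
    {R m p : Type*} [CommRing R] [Fintype m] [Fintype p] [DecidableEq m] [DecidableEq p]
    {A₁₁ : Matrix m m R} {A₁₂ : Matrix m p R} {A₂₁ : Matrix p m R} {A₂₂ : Matrix p p R}
    {d : m ⊕ p → R} {D : Matrix p m R} {E : Matrix m p R}
    (h : fromBlocks A₁₁ A₁₂ A₂₁ A₂₂ * diagonal d * (fromBlocks A₁₁ A₁₂ A₂₁ A₂₂)ᵀ = 1)
    (hD : A₂₁ = D * A₁₁) (hE : A₁₂ = E * A₂₂) :
    Eᵀ = -D := by
  set M := fromBlocks A₁₁ A₁₂ A₂₁ A₂₂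
  set P : Matrix (m ⊕ p) (m ⊕ p) R := fromBlocks 1 (-E) (-D) 1
  have hPM : P * M = fromBlocks (A₁₁ - E * A₂₁) 0 0 (A₂₂ - D * A₁₂) := by
    simp [P, M, fromBlocks_multiply, hD, hE, ← sub_eq_add_neg, neg_add_eq_sub]
  have hPP : P * M * diagonal d * (P * M)ᵀ = P * Pᵀ := by
    rw [transpose_mul, ← mul_assoc, mul_assoc P, mul_assoc P, h, mul_one]
  have hblock : -D + -Eᵀ = 0 := by
    have := congrArg toBlocks₂₁ hPP
    rw [hPM, ← Sum.elim_comp_inl_inr (f := d), ← fromBlocks_diagonal] at this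
    simpa [P, fromBlocks_transpose, fromBlocks_multiply, -fromBlocks_diagonal] using this.symm
  rw [neg_add_eq_zero.mp hblock, neg_neg]

theorem transpose_mul_self_eq_of_submatrix_eq_fromRows {R l n m₁ m₂ : Type*}
    [Semiring R] [Fintype l] [Fintype m₁] [Fintype m₂] (e : m₁ ⊕ m₂ ≃ l) {M : Matrix l n R}
    {B₁ : Matrix m₁ n R} {B₂ : Matrix m₂ n R} (h : M.submatrix e id = fromRows B₁ B₂) :
    Mᵀ * M = B₁ᵀ * B₁ + B₂ᵀ * B₂ := by
  rw [← fromCols_mul_fromRows, ← transpose_fromRows, ← h, transpose_submatrix,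
    submatrix_mul_equiv, submatrix_id_id]

end Matrix

section FinSplit

variable {n v : ℕ}

def finSumFinSubEquiv (hv : v ≤ n) : Fin v ⊕ Fin (n - v) ≃ Fin n :=
  finSumFinEquiv.trans (finCongr (Nat.add_sub_cancel' hv))

@[simp]
theorem finSumFinSubEquiv_inl (hv : v ≤ n) (a : Fin v) :
    finSumFinSubEquiv hv (Sum.inl a) = Fin.castLE hv a := rfl

@[simp]
theorem finSumFinSubEquiv_inr (hv : v ≤ n) (b : Fin (n - v)) :
    finSumFinSubEquiv hv (Sum.inr b) = ⟨v + b.1, lt_tsub_iff_left.mp b.2⟩ := rfl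

end FinSplit

/-- **Corollary 2.5.** Let `A ∈ GL_n(ℂ)` with `Aᵀ A` diagonal, and select the first `v` rows and
columns, so that `A_(v)` is the upper-left `v × v` block, `A^(v)` the lower-right block, `Ā_(v)`
the first `v` columns and `Ā^(v)` the last `n - v` columns of `A`.  Assume the rows of `A_(v)`
and of `A^(v)` are basic sets for the rows of `Ā_(v)` and `Ā^(v)`, respectively, with
(nontrivial) decomposition numbers `d_{ij} = D̂ i j` (expanding the last `n - v` rows of `Ā_(v)`
in the rows of `A_(v)`) and `d′_{ji} = D' j i` (expanding the first `v` rows of `Ā^(v)` in the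
rows of `A^(v)`).  Then `d_{ij} = − d′_{ji}`, and the two Cartan matrices (formed as `DᵀD` from
the full decomposition matrices, which contain an identity block on the basic-set rows) are
`C_(v) = E_v + D̂ᵀ D̂` and `C^(v) = E_{n-v} + D̂ D̂ᵀ`. -/
theorem decomposition_duality_and_Cartan (n v : ℕ) (hv : v ≤ n)
    (A : Matrix (Fin n) (Fin n) ℂ) (hA : IsUnit A.det)
    (z : Fin n → ℂ) (hdiag : Aᵀ * A = Matrix.diagonal z)
    -- the nontrivial decomposition numbers for `Ā_(v)` w.r.t. the rows of `A_(v)` …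
    (Dhat : Matrix (Fin (n - v)) (Fin v) ℤ)
    (hDhat : ∀ (a : Fin (n - v)) (c : Fin v),
      A ⟨v + a.1, by omega⟩ (Fin.castLE hv c) =
        ∑ j : Fin v, (Dhat a j : ℂ) * A (Fin.castLE hv j) (Fin.castLE hv c))
    -- … and those for `Ā^(v)` w.r.t. the rows of `A^(v)`
    (D' : Matrix (Fin v) (Fin (n - v)) ℤ)
    (hD' : ∀ (a : Fin v) (c : Fin (n - v)),
      A (Fin.castLE hv a) ⟨v + c.1, by omega⟩ =
        ∑ j : Fin (n - v), (D' a j : ℂ) * A ⟨v + j.1, by omega⟩ ⟨v + c.1, by omega⟩)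
    -- the full decomposition matrices, with identity blocks on the basic-set rows
    (fullD : Matrix (Fin n) (Fin v) ℤ)
    (hfullD : fullD = fun r j => if h : r.1 < v then (if (⟨r.1, h⟩ : Fin v) = j then 1 else 0)
      else Dhat ⟨r.1 - v, by omega⟩ j)
    (fullD' : Matrix (Fin n) (Fin (n - v)) ℤ)
    (hfullD' : fullD' = fun r j => if h : r.1 < v then D' ⟨r.1, h⟩ j
      else (if (⟨r.1 - v, by omega⟩ : Fin (n - v)) = j then 1 else 0)) :
    (∀ (a : Fin (n - v)) (c : Fin v), Dhat a c = - D' c a) ∧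
    fullDᵀ * fullD = 1 + Dhatᵀ * Dhat ∧
    fullD'ᵀ * fullD' = 1 + Dhat * Dhatᵀ := by
  set e := finSumFinSubEquiv hv
  have hM : A.submatrix e e * diagonal (z⁻¹ ∘ e) * (A.submatrix e e)ᵀ = 1 := by
    rw [transpose_submatrix, ← submatrix_diagonal_equiv, submatrix_mul_equiv, submatrix_mul_equiv,
      mul_diagonal_inv_mul_transpose_eq_one hA hdiag, submatrix_one_equiv]
  rw [← fromBlocks_toBlocks (A.submatrix e e)] at hM
  have hdualℂ := transpose_eq_neg_of_fromBlocks_mul_diagonal_mul_transpose_eq_one hM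
    (D := Dhat.map (↑)) (E := D'.map (↑))
    (by ext a c; simpa [e, mul_apply, toBlocks₂₁, toBlocks₁₁] using hDhat a c)
    (by ext a c; simpa [e, mul_apply, toBlocks₁₂, toBlocks₂₂] using hD' a c)
  have hduality : ∀ a c, Dhat a c = -D' c a := fun a c => by
    have : (D' c a : ℂ) = -(Dhat a c : ℂ) := congr_fun₂ hdualℂ a c
    exact_mod_cast (neg_eq_iff_eq_neg.mpr this).symm
  have hrows : fullD.submatrix e id = fromRows 1 Dhat := by
    subst hfullD
    ext (a | b) j
    · simp only [submatrix, of_apply, e, finSumFinSubEquiv_inl, Fin.val_castLE, Fin.is_lt,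
        ↓reduceDIte, Fin.eta, fromRows_apply_inl, one_apply]
      congr
    · simp [e, submatrix]
  have hrows' : fullD'.submatrix e id = fromRows (-Dhatᵀ) 1 := by
    subst hfullD'
    ext (a | b) j <;> simp [e, one_apply, submatrix, hduality]
  refine ⟨hduality, ?_, ?_⟩
  · simp [transpose_mul_self_eq_of_submatrix_eq_fromRows e hrows]
  · simp [transpose_mul_self_eq_of_submatrix_eq_fromRows e hrows', add_comm]
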